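/- For the target error bound in domain adaptation: for any representation map G and any classifier h ∈ H, the target risk satisfies ε_T(h∘G) ≤ ε_S(h∘G) + (1/2) d_{HΔH}(X_G^S, X_G^T) + λ*(G), where λ*(G) = min_{h'∈H}(ε_S(h'∘G) + ε_T(h'∘G)). -/
import Mathlib


open MeasureTheory

/-- Triangle inequality for the 0-1 disagreement pseudometric. -/
lemma tri_01 {X : Type*} [MeasurableSpace X] (μ : Measure X) [IsProbabilityMeasure μ]
    (a b c : X → Bool) :
    (μ {x | a x ≠ c x}).toReal ≤
      (μ {x | a x ≠ b x}).toReal + (μ {x | b x ≠ c x}).toReal := by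
  have hsub : {x | a x ≠ c x} ⊆ {x | a x ≠ b x} ∪ {x | b x ≠ c x} := by
    intro x hx
    by_cases hab : a x = b x
    · right; simpa [Set.mem_setOf_eq, hab] using hx
    · left; exact hab
  have h1 : μ {x | a x ≠ c x} ≤ μ {x | a x ≠ b x} + μ {x | b x ≠ c x} :=
    (measure_mono hsub).trans (measure_union_le _ _)
  have hfin1 : μ {x | a x ≠ b x} ≠ ⊤ := measure_ne_top μ _
  have hfin2 : μ {x | b x ≠ c x} ≠ ⊤ := measure_ne_top μ _
  calc (μ {x | a x ≠ c x}).toReal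
      ≤ (μ {x | a x ≠ b x} + μ {x | b x ≠ c x}).toReal :=
        ENNReal.toReal_mono (by simp [hfin1, hfin2]) h1
    _ = (μ {x | a x ≠ b x}).toReal + (μ {x | b x ≠ c x}).toReal :=
        ENNReal.toReal_add hfin1 hfin2

/-- Ben-David et al. target error bound specialized to the induced feature
distributions: for any representation `G` and classifier `h ∈ H`,
`ε_T(h∘G) ≤ ε_S(h∘G) + (1/2) d_{HΔH}(X_G^S, X_G^T) + λ*(G)`. -/
theorem da_target_error_bound {X Z : Type*} [MeasurableSpace X]
    (μS μT : Measure X) [IsProbabilityMeasure μS] [IsProbabilityMeasure μT]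
    (G : X → Z) (H : Set (Z → Bool)) (f : X → Bool)
    (h : Z → Bool) (hh : h ∈ H) :
    (μT {x | h (G x) ≠ f x}).toReal ≤
      (μS {x | h (G x) ≠ f x}).toReal
      + (1 / 2) *
        (2 * ⨆ p : H × H,
          |(μS {x | (p.1 : Z → Bool) (G x) ≠ (p.2 : Z → Bool) (G x)}).toReal
            - (μT {x | (p.1 : Z → Bool) (G x) ≠ (p.2 : Z → Bool) (G x)}).toReal|)
      + ⨅ h' : H,
          ((μS {x | (h' : Z → Bool) (G x) ≠ f x}).toReal
            + (μT {x | (h' : Z → Bool) (G x) ≠ f x}).toReal) := by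
  set F : H × H → ℝ := fun p =>
    |(μS {x | (p.1 : Z → Bool) (G x) ≠ (p.2 : Z → Bool) (G x)}).toReal
      - (μT {x | (p.1 : Z → Bool) (G x) ≠ (p.2 : Z → Bool) (G x)}).toReal| with hF
  have hbdd : BddAbove (Set.range F) := by
    refine ⟨2, ?_⟩
    rintro r ⟨p, rfl⟩
    have h1 : (μS {x | (p.1 : Z → Bool) (G x) ≠ (p.2 : Z → Bool) (G x)}).toReal ≤ 1 :=
      ENNReal.toReal_le_of_le_ofReal zero_le_one (by simpa using prob_le_one)
    have h2 : (μT {x | (p.1 : Z → Bool) (G x) ≠ (p.2 : Z → Bool) (G x)}).toReal ≤ 1 :=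
      ENNReal.toReal_le_of_le_ofReal zero_le_one (by simpa using prob_le_one)
    have h1' : (0:ℝ) ≤ (μS {x | (p.1 : Z → Bool) (G x) ≠ (p.2 : Z → Bool) (G x)}).toReal :=
      ENNReal.toReal_nonneg
    have h2' : (0:ℝ) ≤ (μT {x | (p.1 : Z → Bool) (G x) ≠ (p.2 : Z → Bool) (G x)}).toReal :=
      ENNReal.toReal_nonneg
    simp only [hF]
    rw [abs_sub_le_iff]
    constructor <;> linarith
  set D : ℝ := ⨆ p : H × H, F p with hD
  have key : ∀ h' : H,
      (μT {x | h (G x) ≠ f x}).toReal ≤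
        (μS {x | h (G x) ≠ f x}).toReal + D
        + ((μS {x | (h' : Z → Bool) (G x) ≠ f x}).toReal
            + (μT {x | (h' : Z → Bool) (G x) ≠ f x}).toReal) := by
    intro h'
    have t1 : (μT {x | h (G x) ≠ f x}).toReal ≤
        (μT {x | h (G x) ≠ (h' : Z → Bool) (G x)}).toReal
        + (μT {x | (h' : Z → Bool) (G x) ≠ f x}).toReal :=
      tri_01 μT (fun x => h (G x)) (fun x => (h' : Z → Bool) (G x)) f
    have t2 : (μT {x | h (G x) ≠ (h' : Z → Bool) (G x)}).toReal
        - (μS {x | h (G x) ≠ (h' : Z → Bool) (G x)}).toReal ≤ D := by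
      have := le_ciSup hbdd (⟨⟨h, hh⟩, h'⟩ : H × H)
      simp only [hF] at this
      have habs : (μT {x | h (G x) ≠ (h' : Z → Bool) (G x)}).toReal
          - (μS {x | h (G x) ≠ (h' : Z → Bool) (G x)}).toReal ≤
          |(μS {x | h (G x) ≠ (h' : Z → Bool) (G x)}).toReal
            - (μT {x | h (G x) ≠ (h' : Z → Bool) (G x)}).toReal| := by
        rw [abs_sub_comm]
        exact le_abs_self _
      exact habs.trans this
    have t3 : (μS {x | h (G x) ≠ (h' : Z → Bool) (G x)}).toReal ≤
        (μS {x | h (G x) ≠ f x}).toReal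
        + (μS {x | f x ≠ (h' : Z → Bool) (G x)}).toReal :=
      tri_01 μS (fun x => h (G x)) f (fun x => (h' : Z → Bool) (G x))
    have heq : {x | f x ≠ (h' : Z → Bool) (G x)} = {x | (h' : Z → Bool) (G x) ≠ f x} := by
      ext x; exact ne_comm
    rw [heq] at t3
    linarith
  have hinf : (μT {x | h (G x) ≠ f x}).toReal
      - ((μS {x | h (G x) ≠ f x}).toReal + D) ≤
      ⨅ h' : H,
        ((μS {x | (h' : Z → Bool) (G x) ≠ f x}).toReal
          + (μT {x | (h' : Z → Bool) (G x) ≠ f x}).toReal) := by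
    haveI : Nonempty H := ⟨⟨h, hh⟩⟩
    refine le_ciInf fun h' => ?_
    have := key h'
    linarith
  have : (1 / 2 : ℝ) * (2 * D) = D := by ring
  rw [this]
  linarith
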